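/- arXiv:2502.03099 — 3 statements merged into one kernel-verified Lean document; each statement's English description precedes it below -/
import Mathlib

section
/- Let r ≥ 1 and let π = (π_0, …, π_r) be a permutation of {0, …, r}. Then the r×r matrix V_π is invertible, and for every ξ = (ξ_0, …, ξ_r) ∈ ℝ^{r+1} with increment vector x = (ξ_1−ξ_0, ξ_2−ξ_1, …, ξ_r−ξ_{r−1})ᵀ ∈ ℝ^r, one has V_π x = (ξ_{π_1}−ξ_{π_0}, ξ_{π_2}−ξ_{π_1}, …, ξ_{π_r}−ξ_{π_{r−1}})ᵀ. -/
open MeasureTheory ProbabilityTheory Filter Matrix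
open scoped ENNReal NNReal Topology Classical

noncomputable section

/-- The `r × (r+1)` difference matrix `D` with `D_{i,i} = -1`, `D_{i,i+1} = 1`. -/
def diffMatrix (r : ℕ) : Matrix (Fin r) (Fin (r+1)) ℝ :=
  Matrix.of fun i j => if j = i.castSucc then -1 else if j = i.succ then 1 else 0

/-- The `(r+1) × (r+1)` permutation matrix whose `i`-th row is `e_{π i}`. -/
def permMatrix {r : ℕ} (π : Fin (r+1) → Fin (r+1)) : Matrix (Fin (r+1)) (Fin (r+1)) ℝ :=
  Matrix.of fun i j => if j = π i then 1 else 0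

/-- The `(r+1) × r` cumulative-sum matrix `C` with `C_{i,j} = 1` iff `i ≥ j+1`. -/
def cumMatrix (r : ℕ) : Matrix (Fin (r+1)) (Fin r) ℝ :=
  Matrix.of fun i j => if (j : ℕ) + 1 ≤ (i : ℕ) then 1 else 0

/-- The matrix `V_π = D P_π C` associated with an ordinal pattern `π`. -/
def Vpi {r : ℕ} (π : Fin (r+1) → Fin (r+1)) : Matrix (Fin r) (Fin r) ℝ :=
  diffMatrix r * permMatrix π * cumMatrix r

/-!
`D` sends a vector to its increments, `P_π` permutes coordinates and `C` takes partial sums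
starting from `0`. Partial sums of the increments of `ξ` recover `ξ` up to the constant `ξ_0`,
which `D` forgets, so `V_π` maps the increments of `ξ` to the increments of `ξ ∘ π`. Every
vector is the increment vector of its partial sums, hence `V_π` is onto and so invertible.
-/

def increments {r : ℕ} (ξ : Fin (r+1) → ℝ) : Fin r → ℝ :=
  fun i => ξ i.succ - ξ i.castSucc

lemma increments_sub_const {r : ℕ} (ξ : Fin (r+1) → ℝ) (c : ℝ) :
    increments (fun i => ξ i - c) = increments ξ := by
  funext i
  simp only [increments]
  ring

lemma diffMatrix_mulVec {r : ℕ} (y : Fin (r+1) → ℝ) :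
    diffMatrix r *ᵥ y = increments y := by
  funext i
  have hne : i.succ ≠ i.castSucc := Fin.castSucc_lt_succ.ne'
  have hterm : ∀ j : Fin (r+1),
      (if j = i.castSucc then (-1 : ℝ) else if j = i.succ then 1 else 0) * y j
        = (if j = i.succ then y j else 0) - (if j = i.castSucc then y j else 0) := by
    intro j
    by_cases h₁ : j = i.castSucc
    · subst h₁; simp [hne.symm]
    · by_cases h₂ : j = i.succ <;> simp [h₁, h₂, hne]
  simp only [diffMatrix, mulVec, dotProduct, of_apply, hterm, Finset.sum_sub_distrib,
    Finset.sum_ite_eq', Finset.mem_univ, if_true, increments]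

lemma permMatrix_mulVec {r : ℕ} (π : Fin (r+1) → Fin (r+1)) (y : Fin (r+1) → ℝ) :
    permMatrix π *ᵥ y = y ∘ π := by
  funext i
  simp [permMatrix, mulVec, dotProduct]

lemma cumMatrix_mulVec_zero {r : ℕ} (x : Fin r → ℝ) : (cumMatrix r *ᵥ x) 0 = 0 := by
  simp [cumMatrix, mulVec, dotProduct]

lemma cumMatrix_mulVec_succ {r : ℕ} (x : Fin r → ℝ) (i : Fin r) :
    (cumMatrix r *ᵥ x) i.succ = (cumMatrix r *ᵥ x) i.castSucc + x i := by
  have hterm : ∀ j : Fin r,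
      (if (j : ℕ) + 1 ≤ i + 1 then (1 : ℝ) else 0) * x j
        = (if (j : ℕ) + 1 ≤ i then (1 : ℝ) else 0) * x j + (if i = j then x j else 0) := by
    intro j
    rcases lt_trichotomy (j : ℕ) i with h | h | h
    · simp [show (j : ℕ) + 1 ≤ i by omega, (Fin.ne_of_lt h).symm, Fin.lt_def, h.le.not_gt]
    · simp [Fin.ext h]
    · simp [show ¬ (j : ℕ) + 1 ≤ i + 1 by omega, (Fin.ne_of_gt h).symm, h.le.not_gt]
  simp only [cumMatrix, mulVec, dotProduct, of_apply, Fin.val_succ, Fin.val_castSucc, hterm,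
    Finset.sum_add_distrib, Finset.sum_ite_eq, Finset.mem_univ, if_true]

lemma increments_cumMatrix_mulVec {r : ℕ} (x : Fin r → ℝ) :
    increments (cumMatrix r *ᵥ x) = x := by
  funext i
  simp only [increments, cumMatrix_mulVec_succ]
  ring

lemma cumMatrix_mulVec_increments {r : ℕ} (ξ : Fin (r+1) → ℝ) :
    cumMatrix r *ᵥ increments ξ = fun i => ξ i - ξ 0 := by
  funext i
  induction i using Fin.induction with
  | zero => simp [cumMatrix_mulVec_zero]
  | succ i ih => rw [cumMatrix_mulVec_succ, ih, increments]; ring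

lemma Vpi_mulVec_increments {r : ℕ} (π : Fin (r+1) → Fin (r+1)) (ξ : Fin (r+1) → ℝ) :
    Vpi π *ᵥ increments ξ = increments (ξ ∘ π) := by
  rw [Vpi, ← mulVec_mulVec, ← mulVec_mulVec, cumMatrix_mulVec_increments, permMatrix_mulVec,
    diffMatrix_mulVec]
  exact increments_sub_const (ξ ∘ π) (ξ 0)

lemma Vpi_mulVec_surjective {r : ℕ} (π : Equiv.Perm (Fin (r+1))) :
    Function.Surjective (Vpi (fun i => π i) *ᵥ ·) := by
  intro x
  refine ⟨increments ((cumMatrix r *ᵥ x) ∘ π.symm), ?_⟩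
  change Vpi _ *ᵥ _ = x
  rw [Vpi_mulVec_increments, Function.comp_assoc, π.symm_comp_self, Function.comp_id,
    increments_cumMatrix_mulVec]

theorem statement_1_general (r : ℕ) (π : Equiv.Perm (Fin (r+1))) :
    IsUnit (Vpi (fun i => π i)) ∧
    ∀ ξ : Fin (r+1) → ℝ,
      (Vpi (fun i => π i)).mulVec (fun i : Fin r => ξ i.succ - ξ i.castSucc)
        = fun i : Fin r => ξ (π i.succ) - ξ (π i.castSucc) :=
  ⟨mulVec_surjective_iff_isUnit.mp (Vpi_mulVec_surjective π),
    fun ξ => Vpi_mulVec_increments _ ξ⟩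

/-- `V_π` is invertible, and for every `ξ ∈ ℝ^{r+1}` with increment
vector `x`, `V_π x = (ξ_{π_1} - ξ_{π_0}, …, ξ_{π_r} - ξ_{π_{r-1}})ᵀ`. -/
theorem statement_1 (r : ℕ) (hr : 1 ≤ r) (π : Equiv.Perm (Fin (r+1))) :
    IsUnit (Vpi (fun i => π i)) ∧
    ∀ ξ : Fin (r+1) → ℝ,
      (Vpi (fun i => π i)).mulVec (fun i : Fin r => ξ i.succ - ξ i.castSucc)
        = fun i : Fin r => ξ (π i.succ) - ξ (π i.castSucc) :=
  statement_1_general r π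
end
end

section
/- Let X_t = ∑_{j=0}^∞ A_j Z_{t−j} be a multivariate linear process in ℝ^r satisfying Assumption 1 with index J. Then p_J is Lipschitz, and for every j ≥ J the truncated distribution function p_j is Lipschitz with Lipschitz constant at most that of p_J; in particular sup_{j≥J} Lip(p_j) ≤ Lip(p_J) < ∞. -/
/-!
Let `Y = ∑_{i ≤ J} A_i Z_{-i}`. Since `W = D Y` has independent coordinates with bounded densities
and `Y = D⁻¹ W`, every coordinate is `Y_i = c W_k + R` with `c ≠ 0` and `R` independent of `W_k`,
so `P(a < Y_i ≤ b) ≤ M |c|⁻¹ (b - a)`; a union bound over the coordinates makes `p_J` Lipschitz.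
For `j ≥ J` the partial sum is `Y + T` with `T` independent of `Y`, hence `p_j(u) = E[p_J(u - T)]`,
and averaging translates of `p_J` does not increase the Lipschitz constant.
-/

open MeasureTheory ProbabilityTheory Filter Matrix
open scoped ENNReal NNReal Topology Classical

noncomputable section

/-- Euclidean norm on `ℝ^r` (viewed as `Fin r → ℝ`). -/
def eucNorm {r : ℕ} (x : Fin r → ℝ) : ℝ := Real.sqrt (∑ i, (x i) ^ 2)

/-- `LipWith L g` says that `g : ℝ^r → ℝ` is Lipschitz with constant `L`
with respect to the Euclidean norm. -/
def LipWith {r : ℕ} (L : ℝ) (g : (Fin r → ℝ) → ℝ) : Prop :=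
  ∀ x y : Fin r → ℝ, |g x - g y| ≤ L * eucNorm (x - y)

def jointCdf {Ω : Type*} [MeasurableSpace Ω] {r : ℕ} (μ : Measure Ω) (Y : Ω → Fin r → ℝ)
    (u : Fin r → ℝ) : ℝ :=
  (μ {ω | Y ω ≤ u}).toReal

lemma abs_le_eucNorm {r : ℕ} (x : Fin r → ℝ) (i : Fin r) : |x i| ≤ eucNorm x := by
  rw [eucNorm, ← Real.sqrt_sq_eq_abs]
  exact Real.sqrt_le_sqrt (Finset.single_le_sum (f := fun k => x k ^ 2)
    (fun k _ => sq_nonneg _) (Finset.mem_univ i))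

lemma eucNorm_nonneg {r : ℕ} (x : Fin r → ℝ) : 0 ≤ eucNorm x := Real.sqrt_nonneg _

lemma eucNorm_sub_comm {r : ℕ} (x y : Fin r → ℝ) : eucNorm (x - y) = eucNorm (y - x) := by
  unfold eucNorm
  congr 1
  exact Finset.sum_congr rfl fun i _ => by simp only [Pi.sub_apply]; ring

lemma lipWith_of_sub_le {r : ℕ} {L : ℝ} {g : (Fin r → ℝ) → ℝ}
    (h : ∀ x y, g x - g y ≤ L * eucNorm (x - y)) : LipWith L g := fun x y =>
  abs_sub_le_iff.2 ⟨h x y, eucNorm_sub_comm x y ▸ h y x⟩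

lemma ENNReal.le_add_ofReal_iff_toReal_sub_le {a b : ℝ≥0∞} {c : ℝ} (ha : a ≠ ∞) (hb : b ≠ ∞)
    (hc : 0 ≤ c) : a ≤ b + ENNReal.ofReal c ↔ a.toReal - b.toReal ≤ c := by
  rw [← ENNReal.toReal_le_toReal ha (ENNReal.add_ne_top.2 ⟨hb, ENNReal.ofReal_ne_top⟩),
    ENNReal.toReal_add hb ENNReal.ofReal_ne_top, ENNReal.toReal_ofReal hc, sub_le_iff_le_add']

namespace ProbabilityTheory

variable {Ω : Type*} [MeasurableSpace Ω] {μ : Measure Ω}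

lemma iIndepFun.indepFun_finsetSum_finsetSum {ι β : Type*} [MeasurableSpace β] [AddCommMonoid β]
    [MeasurableAdd₂ β] {f : ι → Ω → β} (hf : iIndepFun f μ) (hf_meas : ∀ i, Measurable (f i))
    {S T : Finset ι} (hST : Disjoint S T) :
    IndepFun (fun ω => ∑ i ∈ S, f i ω) (fun ω => ∑ i ∈ T, f i ω) μ := by
  have hsum (U : Finset ι) : Measurable fun z : U → β => ∑ i, z i :=
    Finset.measurable_sum _ fun i _ => measurable_pi_apply i
  convert (hf.indepFun_finset S T hST hf_meas).comp (hsum S) (hsum T) using 2 with ω ω <;>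
    exact (Finset.sum_coe_sort _ _).symm

lemma IndepFun.measure_preimage_eq_lintegral [IsFiniteMeasure μ] {α β : Type*}
    [MeasurableSpace α] [MeasurableSpace β] {X : Ω → α} {Y : Ω → β} (hXY : IndepFun X Y μ)
    (hX : Measurable X) (hY : Measurable Y) {s : Set (α × β)} (hs : MeasurableSet s) :
    μ ((fun ω => (X ω, Y ω)) ⁻¹' s) = ∫⁻ x, μ.map Y (Prod.mk x ⁻¹' s) ∂μ.map X := by
  rw [← Measure.map_apply (hX.prodMk hY) hs,
    (indepFun_iff_map_prod_eq_prod_map_map hX.aemeasurable hY.aemeasurable).1 hXY,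
    Measure.prod_apply hs]

end ProbabilityTheory

section BoundedDensity

variable {Ω : Type*} [MeasurableSpace Ω] {μ : Measure Ω}

lemma volume_setOf_mul_add_mem_Ioc {c : ℝ} (hc : c ≠ 0) (ρ a b : ℝ) :
    volume {w : ℝ | c * w + ρ ∈ Set.Ioc a b}
      = ENNReal.ofReal |c⁻¹| * ENNReal.ofReal (b - a) := by
  change volume ((c * ·) ⁻¹' ((· + ρ) ⁻¹' Set.Ioc a b)) = _
  rw [Real.volume_preimage_mul_left hc, measure_preimage_add_right, Real.volume_Ioc]

lemma measure_mul_add_mem_Ioc_le [IsProbabilityMeasure μ] {W R : Ω → ℝ} (hW : Measurable W)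
    (hR : Measurable R) (hRW : IndepFun R W μ) {f : ℝ → ℝ} {M : ℝ} (hM : 0 ≤ M)
    (hfM : ∀ x, f x ≤ M) (hmap : μ.map W = volume.withDensity fun x => ENNReal.ofReal (f x))
    {c : ℝ} (hc : c ≠ 0) (a b : ℝ) :
    μ {ω | c * W ω + R ω ∈ Set.Ioc a b} ≤ ENNReal.ofReal (M * |c⁻¹| * (b - a)) := by
  have hs : MeasurableSet {p : ℝ × ℝ | c * p.2 + p.1 ∈ Set.Ioc a b} :=
    measurableSet_Ioc.preimage ((measurable_snd.const_mul c).add measurable_fst)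
  have hlaw : μ.map W ≤ ENNReal.ofReal M • volume := by
    rw [hmap, ← withDensity_const]
    exact withDensity_mono (ae_of_all _ fun x => ENNReal.ofReal_le_ofReal (hfM x))
  have : IsProbabilityMeasure (μ.map R) := Measure.isProbabilityMeasure_map hR.aemeasurable
  calc μ {ω | c * W ω + R ω ∈ Set.Ioc a b}
      = ∫⁻ ρ, μ.map W {w | c * w + ρ ∈ Set.Ioc a b} ∂μ.map R :=
        hRW.measure_preimage_eq_lintegral hR hW hs
    _ ≤ ∫⁻ _, ENNReal.ofReal M * (ENNReal.ofReal |c⁻¹| * ENNReal.ofReal (b - a)) ∂μ.map R :=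
        lintegral_mono fun ρ => (Measure.le_iff'.1 hlaw _).trans_eq <| by
          rw [Measure.smul_apply, smul_eq_mul, volume_setOf_mul_add_mem_Ioc hc]
    _ = ENNReal.ofReal (M * |c⁻¹| * (b - a)) := by
        rw [lintegral_const, measure_univ, mul_one, ← ENNReal.ofReal_mul (abs_nonneg _),
          ← ENNReal.ofReal_mul hM, mul_assoc]

lemma exists_measure_apply_mem_Ioc_le_of_iIndepFun_mulVec [IsProbabilityMeasure μ]
    {ι : Type*} [Fintype ι] [DecidableEq ι] {Y : Ω → ι → ℝ} (hY : Measurable Y)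
    {D : Matrix ι ι ℝ} (hD : IsUnit D) (hindep : iIndepFun (fun k ω => (D *ᵥ Y ω) k) μ)
    (hdens : ∀ k, ∃ f : ℝ → ℝ, (∀ x, 0 ≤ f x) ∧ (∃ M, ∀ x, f x ≤ M) ∧
      μ.map (fun ω => (D *ᵥ Y ω) k) = volume.withDensity fun x => ENNReal.ofReal (f x))
    (i : ι) :
    ∃ C : ℝ, 0 ≤ C ∧ ∀ a b, μ {ω | Y ω i ∈ Set.Ioc a b} ≤ ENNReal.ofReal (C * (b - a)) := by
  set W : ι → Ω → ℝ := fun k ω => (D *ᵥ Y ω) k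
  have hW : ∀ k, Measurable (W k) := fun k =>
    (measurable_pi_apply k).comp ((continuous_const.matrix_mulVec continuous_id).measurable.comp hY)
  have hdet : IsUnit D.det := (Matrix.isUnit_iff_isUnit_det D).1 hD
  obtain ⟨k₀, hk₀⟩ : ∃ k, D⁻¹ i k ≠ 0 := by
    by_contra! h
    exact (Matrix.isUnit_nonsing_inv_det D hdet).ne_zero (Matrix.det_eq_zero_of_row_eq_zero i h)
  set g : ι → Ω → ℝ := fun k ω => D⁻¹ i k * W k ω
  set R : Ω → ℝ := fun ω => ∑ k ∈ Finset.univ.erase k₀, g k ω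
  have hg : ∀ k, Measurable (g k) := fun k => (hW k).const_mul _
  have hgi : iIndepFun g μ := hindep.comp (fun k x => D⁻¹ i k * x) fun k => measurable_const_mul _
  have hRg : IndepFun R (g k₀) μ := by
    simpa only [Finset.sum_singleton] using hgi.indepFun_finsetSum_finsetSum hg
      (Finset.disjoint_singleton_right.2 (Finset.notMem_erase k₀ Finset.univ))
  -- `W k₀` is a function of `g k₀ = D⁻¹ i k₀ * W k₀`, as `D⁻¹ i k₀ ≠ 0`.
  have hRW : IndepFun R (W k₀) μ := by
    simpa only [Function.comp_def, g, inv_mul_cancel_left₀ hk₀, id] using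
      hRg.comp measurable_id (measurable_const_mul (D⁻¹ i k₀)⁻¹)
  have hYi : ∀ ω, Y ω i = D⁻¹ i k₀ * W k₀ ω + R ω := fun ω => by
    rw [Finset.add_sum_erase _ (fun k => g k ω) (Finset.mem_univ k₀)]
    calc Y ω i = (D⁻¹ *ᵥ (D *ᵥ Y ω)) i := by
          rw [Matrix.mulVec_mulVec, Matrix.nonsing_inv_mul D hdet, Matrix.one_mulVec]
      _ = ∑ k, g k ω := rfl
  obtain ⟨f, hf0, ⟨M, hfM⟩, hmap⟩ := hdens k₀
  refine ⟨M * |(D⁻¹ i k₀)⁻¹|, mul_nonneg ((hf0 0).trans (hfM 0)) (abs_nonneg _), fun a b => ?_⟩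
  simp only [hYi]
  exact measure_mul_add_mem_Ioc_le (hW k₀) (Finset.measurable_sum _ fun k _ => hg k) hRW
    ((hf0 0).trans (hfM 0)) hfM hmap hk₀ a b

end BoundedDensity

section JointCdf

variable {Ω : Type*} [MeasurableSpace Ω] {μ : Measure Ω} {r : ℕ}

lemma lipWith_jointCdf_of_measure_mem_Ioc_le [IsFiniteMeasure μ] {Y : Ω → Fin r → ℝ}
    {C : Fin r → ℝ} (hC0 : ∀ i, 0 ≤ C i)
    (hC : ∀ i a b, μ {ω | Y ω i ∈ Set.Ioc a b} ≤ ENNReal.ofReal (C i * (b - a))) :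
    LipWith (∑ i, C i) (jointCdf μ Y) := by
  refine lipWith_of_sub_le fun u v => ?_
  have hcover : {ω | Y ω ≤ u} ⊆ {ω | Y ω ≤ v} ∪ ⋃ i, {ω | Y ω i ∈ Set.Ioc (v i) (u i)} := by
    intro ω hu
    by_cases hv : Y ω ≤ v
    · exact Or.inl hv
    · simp only [Pi.le_def, not_forall, not_le] at hv
      obtain ⟨i, hi⟩ := hv
      exact Or.inr (Set.mem_iUnion.2 ⟨i, hi, hu i⟩)
  have hstrip : ∀ i, μ {ω | Y ω i ∈ Set.Ioc (v i) (u i)}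
      ≤ ENNReal.ofReal (C i * eucNorm (u - v)) := fun i =>
    (hC i _ _).trans <| ENNReal.ofReal_le_ofReal <| mul_le_mul_of_nonneg_left
      ((le_abs_self _).trans (abs_le_eucNorm (u - v) i)) (hC0 i)
  refine (ENNReal.le_add_ofReal_iff_toReal_sub_le (measure_ne_top _ _) (measure_ne_top _ _)
    (mul_nonneg (Finset.sum_nonneg fun i _ => hC0 i) (eucNorm_nonneg _))).1 ?_
  calc μ {ω | Y ω ≤ u}
      ≤ μ {ω | Y ω ≤ v} + ∑ i, μ {ω | Y ω i ∈ Set.Ioc (v i) (u i)} :=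
        (measure_mono hcover).trans <| (measure_union_le _ _).trans <|
          add_le_add_right (measure_iUnion_fintype_le _ _) _
    _ ≤ μ {ω | Y ω ≤ v} + ∑ i, ENNReal.ofReal (C i * eucNorm (u - v)) := by
        gcongr with i
        exact hstrip i
    _ = μ {ω | Y ω ≤ v} + ENNReal.ofReal ((∑ i, C i) * eucNorm (u - v)) := by
        rw [Finset.sum_mul, ENNReal.ofReal_sum_of_nonneg fun i _ =>
          mul_nonneg (hC0 i) (eucNorm_nonneg _)]

lemma exists_lipWith_jointCdf_of_iIndepFun_mulVec [IsProbabilityMeasure μ]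
    {Y : Ω → Fin r → ℝ} (hY : Measurable Y) {D : Matrix (Fin r) (Fin r) ℝ} (hD : IsUnit D)
    (hindep : iIndepFun (fun k ω => (D *ᵥ Y ω) k) μ)
    (hdens : ∀ k, ∃ f : ℝ → ℝ, (∀ x, 0 ≤ f x) ∧ (∃ M, ∀ x, f x ≤ M) ∧
      μ.map (fun ω => (D *ᵥ Y ω) k) = volume.withDensity fun x => ENNReal.ofReal (f x)) :
    ∃ L, 0 ≤ L ∧ LipWith L (jointCdf μ Y) := by
  choose C hC0 hC using exists_measure_apply_mem_Ioc_le_of_iIndepFun_mulVec hY hD hindep hdens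
  exact ⟨∑ i, C i, Finset.sum_nonneg fun i _ => hC0 i,
    lipWith_jointCdf_of_measure_mem_Ioc_le hC0 hC⟩

lemma LipWith.jointCdf_add [IsProbabilityMeasure μ] {S T : Ω → Fin r → ℝ} (hS : Measurable S)
    (hT : Measurable T) (hTS : IndepFun T S μ) {L : ℝ} (hL : 0 ≤ L)
    (h : LipWith L (jointCdf μ S)) : LipWith L (jointCdf μ (S + T)) := by
  have : IsProbabilityMeasure (μ.map T) := Measure.isProbabilityMeasure_map hT.aemeasurable
  have hconv : ∀ w, μ {ω | (S + T) ω ≤ w} = ∫⁻ t, μ.map S (Set.Iic (w - t)) ∂μ.map T := by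
    intro w
    have hs : MeasurableSet {p : (Fin r → ℝ) × (Fin r → ℝ) | p.2 + p.1 ≤ w} :=
      measurableSet_le (measurable_snd.add measurable_fst) measurable_const
    rw [show {ω | (S + T) ω ≤ w} = (fun ω => (T ω, S ω)) ⁻¹' {p | p.2 + p.1 ≤ w} from rfl,
      hTS.measure_preimage_eq_lintegral hT hS hs]
    exact lintegral_congr fun t => congrArg _ (Set.ext fun y =>
      (Set.mem_Iic.trans (le_sub_iff_add_le (a := y))).symm)
  have hshift : ∀ u v t, μ.map S (Set.Iic (u - t))
      ≤ μ.map S (Set.Iic (v - t)) + ENNReal.ofReal (L * eucNorm (u - v)) := by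
    intro u v t
    rw [ENNReal.le_add_ofReal_iff_toReal_sub_le (measure_ne_top _ _) (measure_ne_top _ _)
      (mul_nonneg hL (eucNorm_nonneg _)), Measure.map_apply hS measurableSet_Iic,
      Measure.map_apply hS measurableSet_Iic]
    have := (le_abs_self _).trans (h (u - t) (v - t))
    rwa [sub_sub_sub_cancel_right] at this
  refine lipWith_of_sub_le fun u v => ?_
  rw [jointCdf, jointCdf, ← ENNReal.le_add_ofReal_iff_toReal_sub_le (measure_ne_top _ _)
    (measure_ne_top _ _) (mul_nonneg hL (eucNorm_nonneg _)), hconv, hconv]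
  calc ∫⁻ t, μ.map S (Set.Iic (u - t)) ∂μ.map T
      ≤ ∫⁻ t, (μ.map S (Set.Iic (v - t)) + ENNReal.ofReal (L * eucNorm (u - v))) ∂μ.map T :=
        lintegral_mono fun t => hshift u v t
    _ = ∫⁻ t, μ.map S (Set.Iic (v - t)) ∂μ.map T + ENNReal.ofReal (L * eucNorm (u - v)) := by
        rw [lintegral_add_right _ measurable_const, lintegral_const, measure_univ, mul_one]

end JointCdf

theorem statement_12_general
    {Ω : Type*} [MeasureSpace Ω] [IsProbabilityMeasure (ℙ : Measure Ω)]
    (r : ℕ)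
    (A : ℕ → Matrix (Fin r) (Fin r) ℝ)
    (Z : ℤ → Ω → (Fin r → ℝ))
    (hZmeas : ∀ j, Measurable (Z j))
    (hZindep : iIndepFun Z (ℙ : Measure Ω))
    -- truncated distribution functions
    (pj : ℕ → (Fin r → ℝ) → ℝ)
    (hpj : ∀ j u, pj j u =
      ((ℙ : Measure Ω)
        {ω | (∑ i ∈ Finset.range (j + 1), (A i).mulVec (Z (-(i : ℤ)) ω)) ≤ u}).toReal)
    -- Assumption 1 with index J:
    (J : ℕ) (D : Matrix (Fin r) (Fin r) ℝ) (hD : IsUnit D)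
    (hindep : iIndepFun
      (fun i ω => D.mulVec (∑ j ∈ Finset.range (J + 1), (A j).mulVec (Z (-(j : ℤ)) ω)) i)
      (ℙ : Measure Ω))
    (hdens : ∀ i : Fin r, ∃ f : ℝ → ℝ, (∀ x, 0 ≤ f x) ∧ (∃ M, ∀ x, f x ≤ M) ∧
      Measure.map
          (fun ω => D.mulVec (∑ j ∈ Finset.range (J + 1), (A j).mulVec (Z (-(j : ℤ)) ω)) i)
          (ℙ : Measure Ω)
        = MeasureTheory.volume.withDensity fun x => ENNReal.ofReal (f x)) :
    (∃ L : ℝ, 0 ≤ L ∧ LipWith L (pj J)) ∧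
      ∀ j, J ≤ j → ∀ L : ℝ, 0 ≤ L → LipWith L (pj J) → LipWith L (pj j) := by
  set V : ℕ → Ω → Fin r → ℝ := fun i ω => A i *ᵥ Z (-(i : ℤ)) ω
  have hmulVec (i : ℕ) : Measurable (A i *ᵥ ·) :=
    (continuous_const.matrix_mulVec continuous_id).measurable
  have hV (i : ℕ) : Measurable (V i) := (hmulVec i).comp (hZmeas _)
  have hVindep : iIndepFun V ℙ :=
    (hZindep.precomp (g := fun i : ℕ => -(i : ℤ)) fun m n h => by simpa using h).comp _ hmulVec
  have hsum (s : Finset ℕ) : Measurable fun ω => ∑ i ∈ s, V i ω :=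
    Finset.measurable_sum _ fun i _ => hV i
  have hp (j : ℕ) : pj j = jointCdf ℙ fun ω => ∑ i ∈ Finset.range (j + 1), V i ω :=
    funext (hpj j)
  obtain ⟨L₀, hL₀, hLip₀⟩ := exists_lipWith_jointCdf_of_iIndepFun_mulVec (hsum _) hD hindep hdens
  refine ⟨⟨L₀, hL₀, hp J ▸ hLip₀⟩, fun j hj L hL hLipJ => ?_⟩
  have hsplit : (fun ω => ∑ i ∈ Finset.range (j + 1), V i ω)
      = (fun ω => ∑ i ∈ Finset.range (J + 1), V i ω)
        + fun ω => ∑ i ∈ Finset.Ico (J + 1) (j + 1), V i ω :=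
    funext fun ω => (Finset.sum_range_add_sum_Ico _ (by omega)).symm
  have hdisj : Disjoint (Finset.Ico (J + 1) (j + 1)) (Finset.range (J + 1)) :=
    Finset.disjoint_left.2 fun i hi hi' => by
      simp only [Finset.mem_Ico, Finset.mem_range] at hi hi'
      omega
  rw [hp, hsplit]
  exact (hp J ▸ hLipJ).jointCdf_add (hsum _) (hsum _)
    (hVindep.indepFun_finsetSum_finsetSum hV hdisj) hL

/-- Under Assumption 1 with index `J`, the truncated distribution
function `p_J` is Lipschitz, and every `p_j` with `j ≥ J` is Lipschitz with constant
at most that of `p_J`. -/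
theorem statement_12
    {Ω : Type*} [MeasureSpace Ω] [IsProbabilityMeasure (ℙ : Measure Ω)]
    (r : ℕ) (hr : 1 ≤ r)
    (A : ℕ → Matrix (Fin r) (Fin r) ℝ)
    (Z : ℤ → Ω → (Fin r → ℝ))
    (hZmeas : ∀ j, Measurable (Z j))
    (hZindep : iIndepFun Z (ℙ : Measure Ω))
    (hZident : ∀ j, Measure.map (Z j) (ℙ : Measure Ω) = Measure.map (Z 0) (ℙ : Measure Ω))
    (hZint : Integrable (Z 0) (ℙ : Measure Ω))
    (hZcent : ∫ ω, Z 0 ω ∂(ℙ : Measure Ω) = 0)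
    (X : ℤ → Ω → (Fin r → ℝ))
    (hX : ∀ t : ℤ, ∀ᵐ ω ∂(ℙ : Measure Ω),
      HasSum (fun j : ℕ => (A j).mulVec (Z (t - (j : ℤ)) ω)) (X t ω))
    -- truncated distribution functions
    (pj : ℕ → (Fin r → ℝ) → ℝ)
    (hpj : ∀ j u, pj j u =
      ((ℙ : Measure Ω)
        {ω | (∑ i ∈ Finset.range (j + 1), (A i).mulVec (Z (-(i : ℤ)) ω)) ≤ u}).toReal)
    -- Assumption 1 with index J:
    (J : ℕ) (D : Matrix (Fin r) (Fin r) ℝ) (hD : IsUnit D)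
    (hindep : iIndepFun
      (fun i ω => D.mulVec (∑ j ∈ Finset.range (J + 1), (A j).mulVec (Z (-(j : ℤ)) ω)) i)
      (ℙ : Measure Ω))
    (hdens : ∀ i : Fin r, ∃ f : ℝ → ℝ, (∀ x, 0 ≤ f x) ∧ (∃ M, ∀ x, f x ≤ M) ∧
      Measure.map
          (fun ω => D.mulVec (∑ j ∈ Finset.range (J + 1), (A j).mulVec (Z (-(j : ℤ)) ω)) i)
          (ℙ : Measure Ω)
        = MeasureTheory.volume.withDensity fun x => ENNReal.ofReal (f x))
    (hA0 : ∀ j ≤ J, A j ≠ 0) :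
    (∃ L : ℝ, 0 ≤ L ∧ LipWith L (pj J)) ∧
      ∀ j, J ≤ j → ∀ L : ℝ, 0 ≤ L → LipWith L (pj J) → LipWith L (pj j) :=
  statement_12_general r A Z hZmeas hZindep pj hpj J D hD hindep hdens
end
end

section
/- Let X_t = ∑_{j=0}^∞ A_j Z_{t−j} be a multivariate linear process in ℝ^r with A_j = j^{d−1} L(j) for large j, where d ∈ (0, 1/2) and L is a continuous matrix-valued function each of whose entries is slowly varying at infinity, and where (Z_j)_{j∈ℤ} are i.i.d. centered with covariance matrix Σ. Then for every ζ with 0 < ζ < 1 − 2d there exists a constant C > 0 such that for all t and all j ≥ 1, E[‖R_{t,j}‖²] ≤ C · j^{2d−1+ζ}, where R_{t,j} := ∑_{i=j+1}^∞ A_i Z_{t−i}. -/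
open MeasureTheory ProbabilityTheory Filter Matrix
open scoped ENNReal NNReal Topology Classical

/-!
Since the `Z_s` are independent and centred, the terms `A_i Z_{t-i}` of the tail are
uncorrelated, so by Pythagoras on the partial sums and Fatou's lemma
`E‖R_{t,j}‖² ≤ E‖Z_0‖² · ∑_{i>j} ‖A_i‖_F²`. Iterating `|ℓ(2x)| ≤ 2^ε |ℓ(x)|` over dyadic blocks
gives Potter's bound `|ℓ(x)| ≤ C x^ε` for each entry of `L`, hence `‖A_i‖_F² ≤ K i^{q-1}` with
`q = 2d - 1 + ζ < 0`, and telescoping `x^q` bounds the tail sum `∑_{i>j} i^{q-1}` by `j^q / (-q)`.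
-/

open Set Finset

theorem bddAbove_image_Ici_of_eventually_comp_two_mul_le {g : ℝ → ℝ}
    (hg : ContinuousOn g (Ici 1)) (hstep : ∀ᶠ x in atTop, g (2 * x) ≤ g x) :
    BddAbove (g '' Ici 1) := by
  obtain ⟨X, hX⟩ := eventually_atTop.1 (hstep.and (eventually_ge_atTop 1))
  have hX1 : 1 ≤ X := (hX X le_rfl).2
  obtain ⟨M, hM⟩ := (isCompact_Icc (a := (1 : ℝ)) (b := 2 * X)).bddAbove_image
    (hg.mono Icc_subset_Ici_self)
  have hdyadic : ∀ n : ℕ, ∀ y ∈ Icc 1 (2 ^ n * (2 * X)), g y ≤ M := by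
    intro n
    induction n with
    | zero => exact fun y hy => hM (mem_image_of_mem g (by simpa using hy))
    | succ n ih =>
      rintro y ⟨hy1, hy⟩
      rcases le_or_gt y (2 * X) with hyX | hyX
      · exact hM (mem_image_of_mem g ⟨hy1, hyX⟩)
      · calc g y = g (2 * (y / 2)) := by ring_nf
          _ ≤ g (y / 2) := (hX (y / 2) (by linarith)).1
          _ ≤ M := ih _ ⟨by linarith, by rw [pow_succ] at hy; linarith⟩
  refine ⟨M, forall_mem_image.2 fun y hy => ?_⟩
  obtain ⟨n, hn⟩ := pow_unbounded_of_one_lt (y / (2 * X)) one_lt_two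
  rw [div_lt_iff₀ (by linarith)] at hn
  exact hdyadic n y ⟨hy, hn.le⟩

theorem exists_abs_le_mul_rpow_of_tendsto_comp_two_mul_div {ℓ : ℝ → ℝ} (hℓ : Continuous ℓ)
    (hslow : Tendsto (fun x => ℓ (2 * x) / ℓ x) atTop (𝓝 1)) {ε : ℝ} (hε : 0 < ε) :
    ∃ C, ∀ x, 1 ≤ x → |ℓ x| ≤ C * x ^ ε := by
  have h2ε : 1 < (2 : ℝ) ^ ε := Real.one_lt_rpow one_lt_two hε
  have hg : ContinuousOn (fun x => |ℓ x| / x ^ ε) (Ici 1) := by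
    refine hℓ.abs.continuousOn.div (continuousOn_id.rpow_const fun _ _ => Or.inr hε.le)
      fun x hx => (Real.rpow_pos_of_pos (zero_lt_one.trans_le hx) ε).ne'
  have hstep : ∀ᶠ x in atTop, |ℓ (2 * x)| / (2 * x) ^ ε ≤ |ℓ x| / x ^ ε := by
    filter_upwards [hslow.eventually (Ioo_mem_nhds zero_lt_one h2ε), eventually_gt_atTop 0]
      with x ⟨hpos, hlt⟩ hx
    have hℓx : ℓ x ≠ 0 := fun h => by simp [h] at hpos
    have hratio : |ℓ (2 * x)| / 2 ^ ε ≤ |ℓ x| := by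
      rw [div_le_iff₀ (by positivity), ← div_le_iff₀' (abs_pos.2 hℓx), ← abs_div,
        abs_of_pos hpos]
      exact hlt.le
    rw [Real.mul_rpow zero_le_two hx.le, ← div_div]
    gcongr
  obtain ⟨C, hC⟩ := bddAbove_image_Ici_of_eventually_comp_two_mul_le hg hstep
  refine ⟨C, fun x hx => ?_⟩
  rw [← div_le_iff₀ (by positivity)]
  exact hC (mem_image_of_mem _ (mem_Ici.2 hx))

theorem exists_forall_le_mul_of_eventually_le {f g : ℕ → ℝ} {C : ℝ} (hg : ∀ k, 0 < g k)
    (h : ∀ᶠ k in atTop, f k ≤ C * g k) : ∃ K, 0 ≤ K ∧ ∀ k, f k ≤ K * g k := by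
  obtain ⟨N, hN⟩ := eventually_atTop.1 h
  obtain ⟨M, hM⟩ := ((range N).image fun k => f k / g k).bddAbove
  refine ⟨max (max C M) 0, le_max_right _ _, fun k => ?_⟩
  have hK : C ≤ max (max C M) 0 ∧ M ≤ max (max C M) 0 :=
    ⟨(le_max_left C M).trans (le_max_left _ _), (le_max_right C M).trans (le_max_left _ _)⟩
  rcases lt_or_ge k N with hk | hk
  · have hfg : f k / g k ≤ M := hM (Finset.mem_coe.2 (mem_image_of_mem _ (mem_range.2 hk)))
    rw [div_le_iff₀ (hg k)] at hfg
    exact hfg.trans (mul_le_mul_of_nonneg_right hK.2 (hg k).le)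
  · exact (hN k hk).trans (mul_le_mul_of_nonneg_right hK.1 (hg k).le)

theorem neg_mul_rpow_sub_one_le_rpow_sub_rpow {q x : ℝ} (hq : q < 0) (hx : 0 < x) :
    -q * (x + 1) ^ (q - 1) ≤ x ^ q - (x + 1) ^ q := by
  obtain ⟨c, ⟨hxc, hc⟩, hslope⟩ := exists_hasDerivAt_eq_slope (fun y : ℝ => y ^ q)
    (fun y => q * y ^ (q - 1)) (lt_add_one x)
    (continuousOn_id.rpow_const fun y hy => Or.inl (hx.trans_le hy.1).ne')
    fun y hy => Real.hasDerivAt_rpow_const (Or.inl (hx.trans hy.1).ne')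
  have hmono : (x + 1) ^ (q - 1) ≤ c ^ (q - 1) :=
    Real.rpow_le_rpow_of_nonpos (hx.trans hxc) hc.le (by linarith)
  rw [add_sub_cancel_left, div_one] at hslope
  nlinarith

theorem sum_range_rpow_le {q x : ℝ} (hq : q < 0) (hx : 0 < x) (N : ℕ) :
    ∑ i ∈ range N, (x + 1 + i) ^ (q - 1) ≤ x ^ q / -q := by
  have hterm : ∀ i : ℕ, (x + 1 + i) ^ (q - 1) ≤ ((x + i) ^ q - (x + (i + 1 : ℕ)) ^ q) / -q := by
    intro i
    rw [le_div_iff₀ (neg_pos.2 hq), mul_comm, Nat.cast_succ, ← add_assoc, add_right_comm x]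
    exact neg_mul_rpow_sub_one_le_rpow_sub_rpow hq (by positivity)
  calc ∑ i ∈ range N, (x + 1 + i) ^ (q - 1)
      ≤ ∑ i ∈ range N, ((x + i) ^ q - (x + (i + 1 : ℕ)) ^ q) / -q := sum_le_sum fun i _ => hterm i
    _ = (x ^ q - (x + N) ^ q) / -q := by
      rw [← sum_div, sum_range_sub' (fun i : ℕ => (x + i) ^ q), Nat.cast_zero, add_zero]
    _ ≤ x ^ q / -q := by
      have : 0 ≤ (x + N) ^ q := by positivity
      exact div_le_div_of_nonneg_right (by linarith) (by linarith)

theorem sum_range_le_mul_rpow_div {f : ℕ → ℝ} {K q : ℝ} (hq : q < 0) (hK : 0 ≤ K)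
    (hf : ∀ k : ℕ, f (k + 1) ≤ K * ((k : ℝ) + 1) ^ (q - 1)) {j : ℕ} (hj : (0 : ℝ) < j) (N : ℕ) :
    ∑ i ∈ range N, f (j + 1 + i) ≤ K * (j ^ q / -q) :=
  calc ∑ i ∈ range N, f (j + 1 + i)
      ≤ ∑ i ∈ range N, K * ((j : ℝ) + 1 + i) ^ (q - 1) := by
        gcongr with i
        have h := hf (j + i)
        rwa [show j + i + 1 = j + 1 + i by omega, Nat.cast_add, add_right_comm (j : ℝ)] at h
    _ ≤ K * (j ^ q / -q) := by
        rw [← mul_sum]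
        exact mul_le_mul_of_nonneg_left (sum_range_rpow_le hq hj N) hK

section

variable {m n : Type*} [Fintype n]

theorem exists_sum_sq_le_mul_rpow [Fintype m] {L : ℝ → Matrix m n ℝ} (hL : Continuous L)
    (hslow : ∀ a b, Tendsto (fun x => L (2 * x) a b / L x a b) atTop (𝓝 1)) {ζ : ℝ}
    (hζ : 0 < ζ) : ∃ K, ∀ x, 1 ≤ x → ∑ a, ∑ b, L x a b ^ 2 ≤ K * x ^ ζ := by
  choose C hC using fun a b => exists_abs_le_mul_rpow_of_tendsto_comp_two_mul_div
    ((continuous_apply_apply a b).comp hL) (hslow a b) (half_pos hζ)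
  refine ⟨∑ a, ∑ b, C a b ^ 2, fun x hx => ?_⟩
  simp only [sum_mul]
  gcongr with a _ b _
  calc L x a b ^ 2 = |L x a b| ^ 2 := (sq_abs _).symm
    _ ≤ (C a b * x ^ (ζ / 2)) ^ 2 := pow_le_pow_left₀ (abs_nonneg _) (hC a b x hx) 2
    _ = C a b ^ 2 * x ^ ζ := by
      rw [mul_pow, ← Real.rpow_mul_natCast (zero_le_one.trans hx)]; norm_num

theorem exists_sum_sq_succ_le_mul_rpow [Fintype m] {A : ℕ → Matrix m n ℝ} {L : ℝ → Matrix m n ℝ}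
    (hL : Continuous L) (hslow : ∀ a b, Tendsto (fun x => L (2 * x) a b / L x a b) atTop (𝓝 1))
    {d ζ : ℝ} (hζ : 0 < ζ) (hAL : ∀ᶠ k in atTop, A k = ((k : ℝ) ^ (d - 1)) • L k) :
    ∃ K, 0 ≤ K ∧ ∀ k : ℕ, ∑ a, ∑ b, A (k + 1) a b ^ 2 ≤ K * ((k : ℝ) + 1) ^ (2 * d - 2 + ζ) := by
  obtain ⟨K, hK⟩ := exists_sum_sq_le_mul_rpow hL hslow hζ
  refine exists_forall_le_mul_of_eventually_le (C := K) (fun k => by positivity) ?_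
  filter_upwards [(tendsto_add_atTop_nat 1).eventually hAL] with k hk
  have hx : (1 : ℝ) ≤ k + 1 := by linarith [k.cast_nonneg (α := ℝ)]
  simp only [hk, Nat.cast_succ, Matrix.smul_apply, smul_eq_mul, mul_pow, ← mul_sum]
  calc ((k + 1 : ℝ) ^ (d - 1)) ^ 2 * ∑ a, ∑ b, L (k + 1) a b ^ 2
      ≤ ((k + 1 : ℝ) ^ (d - 1)) ^ 2 * (K * (k + 1) ^ ζ) := by gcongr; exact hK _ hx
    _ = K * (k + 1 : ℝ) ^ (2 * d - 2 + ζ) := by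
      rw [← Real.rpow_mul_natCast (by linarith), Real.rpow_add (by linarith)]
      ring_nf

theorem sum_mulVec_sq_le [Fintype m] (B : Matrix m n ℝ) (v : n → ℝ) :
    ∑ a, (B *ᵥ v) a ^ 2 ≤ (∑ a, ∑ b, B a b ^ 2) * ∑ b, v b ^ 2 := by
  rw [sum_mul]
  exact sum_le_sum fun a _ => sum_mul_sq_le_sq_mul_sq _ _ _

section Moments

variable {Ω ι : Type*} [MeasurableSpace Ω] {μ : Measure Ω}

theorem integral_le_of_ae_tendsto_of_integral_le {f : ℕ → Ω → ℝ} {g : Ω → ℝ} {c : ℝ}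
    (hf : ∀ k, Integrable (f k) μ) (hf0 : ∀ k, 0 ≤ᵐ[μ] f k)
    (hlim : ∀ᵐ ω ∂μ, Tendsto (fun k => f k ω) atTop (𝓝 (g ω)))
    (hc : ∀ k, ∫ ω, f k ω ∂μ ≤ c) : ∫ ω, g ω ∂μ ≤ c := by
  have hc0 : 0 ≤ c := (integral_nonneg_of_ae (hf0 0)).trans (hc 0)
  have hg0 : 0 ≤ᵐ[μ] g := by
    filter_upwards [hlim, ae_all_iff.2 hf0] with ω hω h0 using ge_of_tendsto' hω h0
  rw [integral_eq_lintegral_of_nonneg_ae hg0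
    (aestronglyMeasurable_of_tendsto_ae atTop (fun k => (hf k).1) hlim)]
  refine ENNReal.toReal_le_of_le_ofReal hc0 ?_
  calc ∫⁻ ω, ENNReal.ofReal (g ω) ∂μ
      = ∫⁻ ω, liminf (fun k => ENNReal.ofReal (f k ω)) atTop ∂μ := by
        refine lintegral_congr_ae ?_
        filter_upwards [hlim] with ω hω
        exact ((ENNReal.continuous_ofReal.tendsto _).comp hω).liminf_eq.symm
    _ ≤ liminf (fun k => ∫⁻ ω, ENNReal.ofReal (f k ω) ∂μ) atTop :=
        lintegral_liminf_le' fun k => (hf k).1.aemeasurable.ennreal_ofReal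
    _ ≤ ENNReal.ofReal c := by
        refine liminf_le_of_frequently_le' (Frequently.of_forall fun k => ?_)
        rw [← ofReal_integral_eq_lintegral_ofReal (hf k) (hf0 k)]
        exact ENNReal.ofReal_le_ofReal (hc k)

theorem memLp_two_apply_of_integrable_sum_sq {Z : Ω → n → ℝ}
    (hZ : AEStronglyMeasurable Z μ) (hZ2 : Integrable (fun ω => ∑ b, Z ω b ^ 2) μ) (b : n) :
    MemLp (fun ω => Z ω b) 2 μ := by
  have hZb : AEStronglyMeasurable (fun ω => Z ω b) μ :=
    (continuous_apply b).comp_aestronglyMeasurable hZ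
  refine (memLp_two_iff_integrable_sq hZb).2
    (hZ2.mono' (hZb.pow 2) (Eventually.of_forall fun ω => ?_))
  rw [Real.norm_of_nonneg (sq_nonneg _)]
  exact single_le_sum (f := fun b => Z ω b ^ 2) (fun _ _ => sq_nonneg _) (mem_univ b)

theorem memLp_mulVec_apply {p : ℝ≥0∞} {Z : Ω → n → ℝ} (hZ : ∀ b, MemLp (fun ω => Z ω b) p μ)
    (B : Matrix m n ℝ) (a : m) : MemLp (fun ω => (B *ᵥ Z ω) a) p μ := by
  simp only [mulVec, dotProduct]
  exact memLp_finsetSum _ fun b _ => (hZ b).const_mul (B a b)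

theorem integral_mulVec_apply_eq_zero {Z : Ω → n → ℝ} (hZ : ∀ b, Integrable (fun ω => Z ω b) μ)
    (hmean : ∀ b, ∫ ω, Z ω b ∂μ = 0) (B : Matrix m n ℝ) (a : m) :
    ∫ ω, (B *ᵥ Z ω) a ∂μ = 0 := by
  simp only [mulVec, dotProduct]
  rw [integral_finsetSum _ fun b _ => (hZ b).const_mul _]
  simp [integral_const_mul, hmean]

variable [IsProbabilityMeasure μ]

theorem integral_sq_sum_eq_sum_integral_sq {Y : ι → Ω → ℝ} {S : Finset ι}
    (hY : ∀ i ∈ S, MemLp (Y i) 2 μ) (hmean : ∀ i ∈ S, ∫ ω, Y i ω ∂μ = 0)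
    (hindep : Set.Pairwise S fun i j => IndepFun (Y i) (Y j) μ) :
    ∫ ω, (∑ i ∈ S, Y i ω) ^ 2 ∂μ = ∑ i ∈ S, ∫ ω, Y i ω ^ 2 ∂μ := by
  have hsum : MemLp (∑ i ∈ S, Y i) 2 μ := memLp_finsetSum' S hY
  have hsum_mean : ∫ ω, (∑ i ∈ S, Y i) ω ∂μ = 0 := by
    simp only [Finset.sum_apply]
    rw [integral_finsetSum S fun i hi => (hY i hi).integrable one_le_two]
    exact sum_eq_zero hmean
  calc ∫ ω, (∑ i ∈ S, Y i ω) ^ 2 ∂μ = variance (∑ i ∈ S, Y i) μ := by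
        rw [variance_of_integral_eq_zero hsum.aemeasurable hsum_mean]
        simp only [Finset.sum_apply]
    _ = ∑ i ∈ S, variance (Y i) μ := IndepFun.variance_sum hY hindep
    _ = ∑ i ∈ S, ∫ ω, Y i ω ^ 2 ∂μ := sum_congr rfl fun i hi =>
        variance_of_integral_eq_zero (hY i hi).aemeasurable (hmean i hi)

end Moments

section LinearProcess

variable {Ω ι κ : Type*} [MeasurableSpace Ω] {μ : Measure Ω} [IsProbabilityMeasure μ] [Fintype m]
  {Z : ι → Ω → n → ℝ}

theorem integral_sum_sq_sum_mulVec_le (hindep : Pairwise fun s s' => IndepFun (Z s) (Z s') μ)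
    (hZ : ∀ s b, MemLp (fun ω => Z s ω b) 2 μ) (hmean : ∀ s b, ∫ ω, Z s ω b ∂μ = 0)
    {s : κ → ι} (hs : Function.Injective s) (B : κ → Matrix m n ℝ) (S : Finset κ) :
    ∫ ω, ∑ a, (∑ i ∈ S, (B i *ᵥ Z (s i) ω) a) ^ 2 ∂μ
      ≤ ∑ i ∈ S, (∑ a, ∑ b, B i a b ^ 2) * ∫ ω, ∑ b, Z (s i) ω b ^ 2 ∂μ := by
  have hY : ∀ i a, MemLp (fun ω => (B i *ᵥ Z (s i) ω) a) 2 μ := fun i =>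
    memLp_mulVec_apply (hZ (s i)) (B i)
  calc ∫ ω, ∑ a, (∑ i ∈ S, (B i *ᵥ Z (s i) ω) a) ^ 2 ∂μ
      = ∑ a, ∑ i ∈ S, ∫ ω, (B i *ᵥ Z (s i) ω) a ^ 2 ∂μ := by
        rw [integral_finsetSum _ fun a _ => (memLp_finsetSum S fun i _ => hY i a).integrable_sq]
        refine sum_congr rfl fun a _ => integral_sq_sum_eq_sum_integral_sq (fun i _ => hY i a)
          (fun i _ => integral_mulVec_apply_eq_zero (fun b => (hZ (s i) b).integrable one_le_two)
            (hmean (s i)) _ _) fun i _ k _ hik => ?_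
        exact (hindep (hs.ne hik)).comp (φ := fun v => (B i *ᵥ v) a)
          (ψ := fun v => (B k *ᵥ v) a) (by fun_prop) (by fun_prop)
    _ = ∑ i ∈ S, ∫ ω, ∑ a, (B i *ᵥ Z (s i) ω) a ^ 2 ∂μ := by
        rw [sum_comm]
        exact sum_congr rfl fun i _ =>
          (integral_finsetSum _ fun a _ => (hY i a).integrable_sq).symm
    _ ≤ ∑ i ∈ S, (∑ a, ∑ b, B i a b ^ 2) * ∫ ω, ∑ b, Z (s i) ω b ^ 2 ∂μ := by
        refine sum_le_sum fun i _ => ?_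
        rw [← integral_const_mul]
        exact integral_mono (integrable_finsetSum _ fun a _ => (hY i a).integrable_sq)
          ((integrable_finsetSum _ fun b _ => (hZ (s i) b).integrable_sq).const_mul _)
          fun ω => sum_mulVec_sq_le _ _

theorem integral_sum_sq_le_of_hasSum (hindep : Pairwise fun s s' => IndepFun (Z s) (Z s') μ)
    (hZ : ∀ s b, MemLp (fun ω => Z s ω b) 2 μ) (hmean : ∀ s b, ∫ ω, Z s ω b ∂μ = 0)
    {τ : ℝ} (hτ : ∀ s, ∫ ω, ∑ b, Z s ω b ^ 2 ∂μ ≤ τ) {s : ℕ → ι} (hs : Function.Injective s)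
    {B : ℕ → Matrix m n ℝ} {c : ℝ} (hB : ∀ N, ∑ i ∈ range N, ∑ a, ∑ b, B i a b ^ 2 ≤ c)
    {R : Ω → m → ℝ} (hR : ∀ᵐ ω ∂μ, HasSum (fun i => B i *ᵥ Z (s i) ω) (R ω)) :
    ∫ ω, ∑ a, R ω a ^ 2 ∂μ ≤ τ * c := by
  have hτ0 : 0 ≤ τ :=
    (integral_nonneg fun ω => sum_nonneg fun b _ => sq_nonneg (Z (s 0) ω b)).trans (hτ (s 0))
  refine integral_le_of_ae_tendsto_of_integral_le
    (f := fun N ω => ∑ a, (∑ i ∈ range N, (B i *ᵥ Z (s i) ω) a) ^ 2)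
    (fun N => integrable_finsetSum _ fun a _ => (memLp_finsetSum _ fun i _ =>
      memLp_mulVec_apply (hZ (s i)) (B i) a).integrable_sq)
    (fun N => Eventually.of_forall fun ω => sum_nonneg fun a _ => sq_nonneg _) ?_ fun N => ?_
  · filter_upwards [hR] with ω hω
    refine tendsto_finsetSum _ fun a _ => ?_
    simp only [← Finset.sum_apply]
    exact (((continuous_apply a).tendsto _).comp hω.tendsto_sum_nat).pow 2
  · calc _ ≤ ∑ i ∈ range N, (∑ a, ∑ b, B i a b ^ 2) * ∫ ω, ∑ b, Z (s i) ω b ^ 2 ∂μ :=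
          integral_sum_sq_sum_mulVec_le hindep hZ hmean hs B _
      _ ≤ ∑ i ∈ range N, (∑ a, ∑ b, B i a b ^ 2) * τ := by
          gcongr with i
          exact hτ (s i)
      _ ≤ τ * c := by
          rw [← sum_mul, mul_comm]
          exact mul_le_mul_of_nonneg_left (hB N) hτ0

theorem integral_sum_sq_le_of_hasSum_of_identDistrib
    (hindep : Pairwise fun s s' => IndepFun (Z s) (Z s') μ) {s₀ : ι}
    (hident : ∀ s, IdentDistrib (Z s) (Z s₀) μ μ) (hcent : ∫ ω, Z s₀ ω ∂μ = 0)
    (hZ2 : Integrable (fun ω => ∑ b, Z s₀ ω b ^ 2) μ) {s : ℕ → ι} (hs : Function.Injective s)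
    {B : ℕ → Matrix m n ℝ} {c : ℝ} (hB : ∀ N, ∑ i ∈ range N, ∑ a, ∑ b, B i a b ^ 2 ≤ c)
    {R : Ω → m → ℝ} (hR : ∀ᵐ ω ∂μ, HasSum (fun i => B i *ᵥ Z (s i) ω) (R ω)) :
    ∫ ω, ∑ a, R ω a ^ 2 ∂μ ≤ (∫ ω, ∑ b, Z s₀ ω b ^ 2 ∂μ) * c := by
  have hL2 : ∀ s b, MemLp (fun ω => Z s ω b) 2 μ := fun s b =>
    ((hident s).comp (measurable_pi_apply b)).memLp_iff.2
      (memLp_two_apply_of_integrable_sum_sq (hident s₀).aemeasurable_fst.aestronglyMeasurable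
        hZ2 b)
  have hmean : ∀ s b, ∫ ω, Z s ω b ∂μ = 0 := fun s b => by
    refine ((hident s).comp (measurable_pi_apply b)).integral_eq.trans ?_
    rw [Function.comp_def, ← eval_integral fun b => (hL2 s₀ b).integrable one_le_two, hcent,
      Pi.zero_apply]
  refine integral_sum_sq_le_of_hasSum hindep hL2 hmean (fun s => ?_) hs hB hR
  exact ((hident s).comp (u := fun v : n → ℝ => ∑ b, v b ^ 2) (by fun_prop)).integral_eq.le

end LinearProcess

end

theorem statement_14_general
    {Ω : Type*} [MeasureSpace Ω] [IsProbabilityMeasure (ℙ : Measure Ω)]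
    (r : ℕ)
    (A : ℕ → Matrix (Fin r) (Fin r) ℝ)
    (Z : ℤ → Ω → (Fin r → ℝ))
    (hZmeas : ∀ j, Measurable (Z j))
    (hZindep : iIndepFun Z (ℙ : Measure Ω))
    (hZident : ∀ j, Measure.map (Z j) (ℙ : Measure Ω) = Measure.map (Z 0) (ℙ : Measure Ω))
    (hZcent : ∫ ω, Z 0 ω ∂(ℙ : Measure Ω) = 0)
    (hZ2 : Integrable (fun ω => ∑ i, (Z 0 ω i) ^ 2) (ℙ : Measure Ω))
    -- A_j = j^{d-1} L(j) for large j, with L continuous and entrywise slowly varying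
    (d : ℝ)
    (L : ℝ → Matrix (Fin r) (Fin r) ℝ)
    (hLcont : Continuous L)
    (hLslow : ∀ (i k : Fin r) (c : ℝ), 0 < c →
      Tendsto (fun x : ℝ => L (c * x) i k / L x i k) atTop (𝓝 1))
    (hAL : ∃ N : ℕ, ∀ j : ℕ, N ≤ j → A j = ((j : ℝ) ^ (d - 1)) • L (j : ℝ))
    -- the tails of the series
    (R : ℤ → ℕ → Ω → (Fin r → ℝ))
    (hR : ∀ (t : ℤ) (j : ℕ), ∀ᵐ ω ∂(ℙ : Measure Ω),
      HasSum (fun i : ℕ => (A (j + 1 + i)).mulVec (Z (t - ((j : ℤ) + 1 + (i : ℤ))) ω))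
        (R t j ω)) :
    ∀ ζ : ℝ, 0 < ζ → ζ < 1 - 2 * d →
      ∃ C : ℝ, 0 < C ∧ ∀ (t : ℤ) (j : ℕ), 1 ≤ j →
        ∫ ω, ∑ i, (R t j ω i) ^ 2 ∂(ℙ : Measure Ω) ≤ C * (j : ℝ) ^ (2 * d - 1 + ζ) := by
  intro ζ hζ hζd
  set q := 2 * d - 1 + ζ with hq_def
  have hq : q < 0 := by linarith
  obtain ⟨K, hK0, hK⟩ := exists_sum_sq_succ_le_mul_rpow hLcont (fun a b => hLslow a b 2 two_pos)
    hζ (eventually_atTop.2 hAL)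
  rw [show 2 * d - 2 + ζ = q - 1 by rw [hq_def]; ring] at hK
  set τ := ∫ ω, ∑ b, Z 0 ω b ^ 2 ∂ℙ
  have hτ0 : 0 ≤ τ := integral_nonneg fun ω => by positivity
  have hKq : 0 ≤ K / -q := div_nonneg hK0 (neg_nonneg.2 hq.le)
  refine ⟨τ * (K / -q) + 1, by positivity, fun t j hj => ?_⟩
  have hj0 : (0 : ℝ) < j := by exact_mod_cast hj
  have hs : Function.Injective fun i : ℕ => t - ((j : ℤ) + 1 + (i : ℤ)) := fun i k h => by
    simpa using h
  calc ∫ ω, ∑ a, R t j ω a ^ 2 ∂ℙ ≤ τ * (K * (j ^ q / -q)) :=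
        integral_sum_sq_le_of_hasSum_of_identDistrib (fun _ _ h => hZindep.indepFun h)
          (fun s => ⟨(hZmeas s).aemeasurable, (hZmeas 0).aemeasurable, hZident s⟩) hZcent hZ2 hs
          (sum_range_le_mul_rpow_div (f := fun k => ∑ a, ∑ b, A k a b ^ 2) hq hK0 hK hj0) (hR t j)
    _ ≤ (τ * (K / -q) + 1) * j ^ q := by
        have : 0 < (j : ℝ) ^ q := by positivity
        rw [mul_div_assoc', mul_div_right_comm, ← mul_assoc]
        nlinarith

/-- second-moment bound for the tails `R_{t,j}` of a long-range
dependent multivariate linear process with slowly varying coefficient part. -/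
theorem statement_14
    {Ω : Type*} [MeasureSpace Ω] [IsProbabilityMeasure (ℙ : Measure Ω)]
    (r : ℕ) (hr : 1 ≤ r)
    (A : ℕ → Matrix (Fin r) (Fin r) ℝ)
    (Z : ℤ → Ω → (Fin r → ℝ))
    (hZmeas : ∀ j, Measurable (Z j))
    (hZindep : iIndepFun Z (ℙ : Measure Ω))
    (hZident : ∀ j, Measure.map (Z j) (ℙ : Measure Ω) = Measure.map (Z 0) (ℙ : Measure Ω))
    (hZint : Integrable (Z 0) (ℙ : Measure Ω))
    (hZcent : ∫ ω, Z 0 ω ∂(ℙ : Measure Ω) = 0)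
    (Sig : Matrix (Fin r) (Fin r) ℝ)
    (hZcov : ∀ i k : Fin r, ∫ ω, Z 0 ω i * Z 0 ω k ∂(ℙ : Measure Ω) = Sig i k)
    (hZ2 : Integrable (fun ω => ∑ i, (Z 0 ω i) ^ 2) (ℙ : Measure Ω))
    (X : ℤ → Ω → (Fin r → ℝ))
    (hX : ∀ t : ℤ, ∀ᵐ ω ∂(ℙ : Measure Ω),
      HasSum (fun j : ℕ => (A j).mulVec (Z (t - (j : ℤ)) ω)) (X t ω))
    -- A_j = j^{d-1} L(j) for large j, with L continuous and entrywise slowly varying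
    (d : ℝ) (hd0 : 0 < d) (hd12 : d < 1 / 2)
    (L : ℝ → Matrix (Fin r) (Fin r) ℝ)
    (hLcont : Continuous L)
    (hLslow : ∀ (i k : Fin r) (c : ℝ), 0 < c →
      Tendsto (fun x : ℝ => L (c * x) i k / L x i k) atTop (𝓝 1))
    (hAL : ∃ N : ℕ, ∀ j : ℕ, N ≤ j → A j = ((j : ℝ) ^ (d - 1)) • L (j : ℝ))
    -- the tails of the series
    (R : ℤ → ℕ → Ω → (Fin r → ℝ))
    (hR : ∀ (t : ℤ) (j : ℕ), ∀ᵐ ω ∂(ℙ : Measure Ω),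
      HasSum (fun i : ℕ => (A (j + 1 + i)).mulVec (Z (t - ((j : ℤ) + 1 + (i : ℤ))) ω))
        (R t j ω)) :
    ∀ ζ : ℝ, 0 < ζ → ζ < 1 - 2 * d →
      ∃ C : ℝ, 0 < C ∧ ∀ (t : ℤ) (j : ℕ), 1 ≤ j →
        ∫ ω, ∑ i, (R t j ω i) ^ 2 ∂(ℙ : Measure Ω) ≤ C * (j : ℝ) ^ (2 * d - 1 + ζ) :=
  statement_14_general r A Z hZmeas hZindep hZident hZcent hZ2 d L hLcont hLslow hAL R hR
end
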